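/- arXiv:2504.03606 — 2 statements merged into one kernel-verified Lean document; each statement's English description precedes it below -/
import Mathlib

section
/- Let m(x) = ½(x−x_k)ᵀH(x−x_k) + gᵀ(x−x_k) + c be a quadratic on R^n with H symmetric. Then the squared L² norm of m over the ball B(x_k, r) equals V_n r^n · [ c² + (r²/(n+2)) (‖g‖₂² + c·Tr(H)) + (r⁴/(2(n+4)(n+2))) ‖H‖_F² + (r⁴/(4(n+4)(n+2))) (Tr H)² ], where V_n is the volume of the n-dimensional unit ball. -/
/-!
Lebesgue measure on a centred ball is invariant under linear isometries, and a reflection maps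
any vector to any other vector of the same norm, so `∫ ⟪v, x⟫ ^ k` over the ball depends only on
`‖v‖`, homogeneously of degree `k`. Polarization then pins down the moment tensors
`∫ ⟪a, x⟫ ⟪b, x⟫` and `∫ ⟪a, x⟫ ⟪a', x⟫ ⟪b, x⟫ ⟪b', x⟫` up to one scalar each, and tracing them over
an orthonormal basis identifies these scalars with the radial integrals `∫ ‖x‖ ^ 2`, `∫ ‖x‖ ^ 4`.
After centring the ball at `x_k`, the symmetry `x ↦ -x` kills the odd part of `m²`, and the even
part only involves these second and fourth moments contracted with `g` and `H`.
-/

open MeasureTheory Metric Module Set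
open scoped RealInnerProductSpace

section Isotropy

variable {E : Type*} [NormedAddCommGroup E] [InnerProductSpace ℝ E]

theorem OrthonormalBasis.sum_inner_sq {ι : Type*} [Fintype ι] (b : OrthonormalBasis ι ℝ E) (x : E) :
    ∑ i, ⟪b i, x⟫ ^ 2 = ‖x‖ ^ 2 := by
  simpa [sq, real_inner_comm x, real_inner_self_eq_norm_sq] using b.sum_inner_mul_inner x x

variable [FiniteDimensional ℝ E] [MeasurableSpace E] [BorelSpace E]

theorem setIntegral_closedBall_comp_linearIsometryEquiv {F : Type*} [NormedAddCommGroup F]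
    [NormedSpace ℝ F] (T : E ≃ₗᵢ[ℝ] E) (f : E → F) (r : ℝ) :
    ∫ x in closedBall 0 r, f (T x) = ∫ x in closedBall 0 r, f x := by
  have hpre : T ⁻¹' closedBall 0 r = closedBall 0 r := by ext x; simp
  have := T.measurePreserving.setIntegral_preimage_emb T.toMeasurableEquiv.measurableEmbedding f
    (closedBall 0 r)
  rwa [hpre] at this

theorem setIntegral_closedBall_comp_inner_eq {v w : E} (h : ‖v‖ = ‖w‖) (f : ℝ → ℝ) (r : ℝ) :
    ∫ x in closedBall 0 r, f ⟪v, x⟫ = ∫ x in closedBall 0 r, f ⟪w, x⟫ := by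
  let R := (ℝ ∙ (v - w))ᗮ.reflection
  have hR (x : E) : ⟪w, R x⟫ = ⟪v, x⟫ := by
    rw [← Submodule.reflection_sub h, LinearIsometryEquiv.inner_map_map]
  simp_rw [← hR]
  exact setIntegral_closedBall_comp_linearIsometryEquiv R (fun x => f ⟪w, x⟫) r

theorem norm_pow_mul_setIntegral_closedBall_inner_pow (u v : E) (k : ℕ) (r : ℝ) :
    ‖u‖ ^ k * ∫ x in closedBall 0 r, ⟪v, x⟫ ^ k = ‖v‖ ^ k * ∫ x in closedBall 0 r, ⟪u, x⟫ ^ k := by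
  have h : ‖‖u‖ • v‖ = ‖‖v‖ • u‖ := by simp [norm_smul, mul_comm]
  simpa [real_inner_smul_left, mul_pow, integral_const_mul] using
    setIntegral_closedBall_comp_inner_eq h (· ^ k) r

theorem integrable_restrict_closedBall_of_continuous {f : E → ℝ} (hf : Continuous f) (r : ℝ) :
    Integrable f (volume.restrict (closedBall 0 r)) :=
  hf.continuousOn.integrableOn_compact (isCompact_closedBall _ _)

theorem finrank_mul_setIntegral_closedBall_inner_sq (v : E) (r : ℝ) :
    finrank ℝ E * ∫ x in closedBall 0 r, ⟪v, x⟫ ^ 2 =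
      ‖v‖ ^ 2 * ∫ x in closedBall (0 : E) r, ‖x‖ ^ 2 := by
  let b := stdOrthonormalBasis ℝ E
  have hb (i) :
      ‖v‖ ^ 2 * ∫ x in closedBall 0 r, ⟪b i, x⟫ ^ 2 = ∫ x in closedBall 0 r, ⟪v, x⟫ ^ 2 := by
    simpa [b.orthonormal.1 i] using norm_pow_mul_setIntegral_closedBall_inner_pow v (b i) 2 r
  calc finrank ℝ E * ∫ x in closedBall 0 r, ⟪v, x⟫ ^ 2
      = ∑ i, ‖v‖ ^ 2 * ∫ x in closedBall 0 r, ⟪b i, x⟫ ^ 2 := by simp [hb]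
    _ = ‖v‖ ^ 2 * ∫ x in closedBall 0 r, ∑ i, ⟪b i, x⟫ ^ 2 := by
      rw [integral_finsetSum _ fun i _ =>
        integrable_restrict_closedBall_of_continuous (by fun_prop) r, Finset.mul_sum]
    _ = ‖v‖ ^ 2 * ∫ x in closedBall (0 : E) r, ‖x‖ ^ 2 := by simp_rw [b.sum_inner_sq]

theorem setIntegral_closedBall_norm_pow [Nontrivial E] (k : ℕ) {r : ℝ} (hr : 0 ≤ r) :
    ∫ x in closedBall (0 : E) r, ‖x‖ ^ k =
      volume.real (closedBall (0 : E) 1) * (finrank ℝ E / (finrank ℝ E + k)) *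
        r ^ (finrank ℝ E + k) := by
  have hm : finrank ℝ E - 1 + k + 1 = finrank ℝ E + k := by
    have : 0 < finrank ℝ E := finrank_pos
    omega
  have hball : ∀ x : E, (closedBall (0 : E) r).indicator (‖·‖ ^ k) x =
      (Iic r).indicator (· ^ k) ‖x‖ := fun x => by
    by_cases h : ‖x‖ ≤ r <;> simp [h]
  have hpow : ∀ y : ℝ, y ^ (finrank ℝ E - 1) • (Iic r).indicator (· ^ k) y =
      (Iic r).indicator (· ^ (finrank ℝ E - 1 + k)) y := fun y => by
    by_cases h : y ∈ Iic r <;> simp [h, pow_add]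
  rw [← integral_indicator measurableSet_closedBall]
  simp_rw [hball]
  rw [integral_fun_norm_addHaar volume (fun y => (Iic r).indicator (· ^ k) y)]
  simp_rw [hpow]
  rw [setIntegral_indicator measurableSet_Iic, Ioi_inter_Iic,
    ← intervalIntegral.integral_of_le hr, integral_pow,
    ← Measure.addHaar_real_closedBall_eq_addHaar_real_ball,
    hm, show ((finrank ℝ E - 1 + k : ℕ) : ℝ) + 1 = finrank ℝ E + k by exact_mod_cast hm,
    zero_pow (by omega), sub_zero, nsmul_eq_mul, smul_eq_mul]
  ring

theorem setIntegral_closedBall_inner_sq (v : E) {r : ℝ} (hr : 0 ≤ r) :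
    ∫ x in closedBall 0 r, ⟪v, x⟫ ^ 2 =
      ‖v‖ ^ 2 *
        (volume.real (closedBall (0 : E) 1) * r ^ (finrank ℝ E + 2) / (finrank ℝ E + 2)) := by
  rcases subsingleton_or_nontrivial E with hE | hE
  · simp [Subsingleton.elim v 0]
  have hn : (0 : ℝ) < finrank ℝ E := by exact_mod_cast finrank_pos
  have h := finrank_mul_setIntegral_closedBall_inner_sq v r
  rw [setIntegral_closedBall_norm_pow 2 hr] at h
  apply mul_left_cancel₀ hn.ne'
  rw [h]
  push_cast
  field_simp

theorem setIntegral_closedBall_inner_mul_inner (a b : E) {r : ℝ} (hr : 0 ≤ r) :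
    ∫ x in closedBall 0 r, ⟪a, x⟫ * ⟪b, x⟫ =
      ⟪a, b⟫ *
        (volume.real (closedBall (0 : E) 1) * r ^ (finrank ℝ E + 2) / (finrank ℝ E + 2)) := by
  have hpolar (x : E) : ⟪a, x⟫ * ⟪b, x⟫ = (⟪a + b, x⟫ ^ 2 - ⟪a - b, x⟫ ^ 2) / 4 := by
    simp only [inner_add_left, inner_sub_left]; ring
  simp_rw [hpolar]
  rw [integral_div, integral_sub, setIntegral_closedBall_inner_sq _ hr,
    setIntegral_closedBall_inner_sq _ hr, norm_add_sq_real, norm_sub_sq_real]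
  · ring
  all_goals exact integrable_restrict_closedBall_of_continuous (by fun_prop) r

theorem norm_pow_four_mul_setIntegral_closedBall_inner_sq_mul_inner_sq (u a b : E) (r : ℝ) :
    3 * ‖u‖ ^ 4 * ∫ x in closedBall 0 r, ⟪a, x⟫ ^ 2 * ⟪b, x⟫ ^ 2 =
      (‖a‖ ^ 2 * ‖b‖ ^ 2 + 2 * ⟪a, b⟫ ^ 2) * ∫ x in closedBall 0 r, ⟪u, x⟫ ^ 4 := by
  have hpolar (x : E) : ⟪a, x⟫ ^ 2 * ⟪b, x⟫ ^ 2 =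
      (⟪a + b, x⟫ ^ 4 + ⟪a - b, x⟫ ^ 4 - 2 * ⟪a, x⟫ ^ 4 - 2 * ⟪b, x⟫ ^ 4) / 12 := by
    simp only [inner_add_left, inner_sub_left]; ring
  have hsq (w : E) : ‖w‖ ^ 4 = (‖w‖ ^ 2) ^ 2 := by ring
  have h₁ := norm_pow_mul_setIntegral_closedBall_inner_pow u (a + b) 4 r
  have h₂ := norm_pow_mul_setIntegral_closedBall_inner_pow u (a - b) 4 r
  have h₃ := norm_pow_mul_setIntegral_closedBall_inner_pow u a 4 r
  have h₄ := norm_pow_mul_setIntegral_closedBall_inner_pow u b 4 r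
  rw [hsq (a + b), norm_add_sq_real] at h₁
  rw [hsq (a - b), norm_sub_sq_real] at h₂
  simp_rw [hpolar]
  rw [integral_div, integral_sub, integral_sub, integral_add, integral_const_mul,
    integral_const_mul]
  · linear_combination (h₁ + h₂ - 2 * h₃ - 2 * h₄) / 4
  all_goals exact integrable_restrict_closedBall_of_continuous (by fun_prop) r

theorem finrank_mul_finrank_add_two_mul_setIntegral_closedBall_inner_pow_four (u : E) (r : ℝ) :
    finrank ℝ E * (finrank ℝ E + 2) * ∫ x in closedBall 0 r, ⟪u, x⟫ ^ 4 =
      3 * ‖u‖ ^ 4 * ∫ x in closedBall (0 : E) r, ‖x‖ ^ 4 := by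
  let b := stdOrthonormalBasis ℝ E
  have hnorm (x : E) : ‖x‖ ^ 4 = ∑ i, ∑ j, ⟪b i, x⟫ ^ 2 * ⟪b j, x⟫ ^ 2 := by
    rw [show ‖x‖ ^ 4 = ‖x‖ ^ 2 * ‖x‖ ^ 2 by ring, ← b.sum_inner_sq, Finset.sum_mul_sum]
  have hb (i j) : 3 * ‖u‖ ^ 4 * ∫ x in closedBall 0 r, ⟪b i, x⟫ ^ 2 * ⟪b j, x⟫ ^ 2 =
      (1 + 2 * if i = j then 1 else 0) * ∫ x in closedBall 0 r, ⟪u, x⟫ ^ 4 := by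
    rw [norm_pow_four_mul_setIntegral_closedBall_inner_sq_mul_inner_sq, b.inner_eq_ite]
    simp [b.norm_eq_one]
  have hsum : ∫ x in closedBall (0 : E) r, ‖x‖ ^ 4 =
      ∑ i, ∑ j, ∫ x in closedBall 0 r, ⟪b i, x⟫ ^ 2 * ⟪b j, x⟫ ^ 2 := by
    simp_rw [hnorm]
    simp (disch := exact fun _ _ => integrable_restrict_closedBall_of_continuous (by fun_prop) r)
      only [integral_finsetSum]
  simp_rw [hsum, Finset.mul_sum, hb]
  simp [Finset.sum_add_distrib, ← Finset.sum_mul]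
  ring

theorem setIntegral_closedBall_inner_sq_mul_inner_sq (a b : E) {r : ℝ} (hr : 0 ≤ r) :
    ∫ x in closedBall 0 r, ⟪a, x⟫ ^ 2 * ⟪b, x⟫ ^ 2 =
      (‖a‖ ^ 2 * ‖b‖ ^ 2 + 2 * ⟪a, b⟫ ^ 2) * (volume.real (closedBall (0 : E) 1) *
        r ^ (finrank ℝ E + 4) / ((finrank ℝ E + 2) * (finrank ℝ E + 4))) := by
  rcases subsingleton_or_nontrivial E with hE | hE
  · simp [Subsingleton.elim a 0]
  obtain ⟨u, hu⟩ := exists_ne (0 : E)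
  have hn : (0 : ℝ) < finrank ℝ E := by exact_mod_cast finrank_pos
  have hS := norm_pow_four_mul_setIntegral_closedBall_inner_sq_mul_inner_sq u a b r
  have hQ := finrank_mul_finrank_add_two_mul_setIntegral_closedBall_inner_pow_four u r
  rw [setIntegral_closedBall_norm_pow 4 hr] at hQ
  apply mul_left_cancel₀ (show 3 * ‖u‖ ^ 4 * (finrank ℝ E * (finrank ℝ E + 2)) ≠ 0 by positivity)
  calc 3 * ‖u‖ ^ 4 * (finrank ℝ E * (finrank ℝ E + 2)) *
        ∫ x in closedBall 0 r, ⟪a, x⟫ ^ 2 * ⟪b, x⟫ ^ 2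
      = (‖a‖ ^ 2 * ‖b‖ ^ 2 + 2 * ⟪a, b⟫ ^ 2) *
          (finrank ℝ E * (finrank ℝ E + 2) * ∫ x in closedBall 0 r, ⟪u, x⟫ ^ 4) := by
        linear_combination (finrank ℝ E * (finrank ℝ E + 2) : ℝ) * hS
    _ = _ := by
        rw [hQ]
        push_cast
        field_simp

theorem setIntegral_closedBall_inner_mul_inner_mul_inner_mul_inner (a a' b b' : E) {r : ℝ}
    (hr : 0 ≤ r) :
    ∫ x in closedBall 0 r, ⟪a, x⟫ * ⟪a', x⟫ * ⟪b, x⟫ * ⟪b', x⟫ =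
      (⟪a, a'⟫ * ⟪b, b'⟫ + ⟪a, b⟫ * ⟪a', b'⟫ + ⟪a, b'⟫ * ⟪a', b⟫) *
        (volume.real (closedBall (0 : E) 1) * r ^ (finrank ℝ E + 4) /
          ((finrank ℝ E + 2) * (finrank ℝ E + 4))) := by
  have hpolar (x : E) : ⟪a, x⟫ * ⟪a', x⟫ * ⟪b, x⟫ * ⟪b', x⟫ =
      (⟪a + a', x⟫ ^ 2 * ⟪b + b', x⟫ ^ 2 - ⟪a + a', x⟫ ^ 2 * ⟪b - b', x⟫ ^ 2 -
        ⟪a - a', x⟫ ^ 2 * ⟪b + b', x⟫ ^ 2 + ⟪a - a', x⟫ ^ 2 * ⟪b - b', x⟫ ^ 2) / 16 := by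
    simp only [inner_add_left, inner_sub_left]; ring
  simp_rw [hpolar]
  rw [integral_div, integral_add, integral_sub, integral_sub]
  · simp only [setIntegral_closedBall_inner_sq_mul_inner_sq _ _ hr]
    simp only [norm_add_sq_real, norm_sub_sq_real, inner_add_left, inner_add_right,
      inner_sub_left, inner_sub_right]
    ring
  all_goals exact integrable_restrict_closedBall_of_continuous (by fun_prop) r

theorem setIntegral_closedBall_comp_sub {F : Type*} [NormedAddCommGroup F] [NormedSpace ℝ F]
    (x₀ : E) (f : E → F) (r : ℝ) :
    ∫ x in closedBall x₀ r, f (x - x₀) = ∫ x in closedBall 0 r, f x := by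
  have hpre : (· + x₀) ⁻¹' closedBall x₀ r = closedBall 0 r := by ext y; simp
  have := (measurePreserving_add_right volume x₀).setIntegral_preimage_emb
    (MeasurableEquiv.addRight x₀).measurableEmbedding (fun x => f (x - x₀)) (closedBall x₀ r)
  simpa [hpre] using this.symm

theorem setIntegral_closedBall_eq_zero_of_odd {f : E → ℝ} (hf : ∀ x, f (-x) = -f x) (r : ℝ) :
    ∫ x in closedBall 0 r, f x = 0 := by
  have := setIntegral_closedBall_comp_linearIsometryEquiv (.neg ℝ) f r
  simp only [LinearIsometryEquiv.coe_neg, hf, integral_neg] at this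
  linarith

end Isotropy

section Euclidean

variable {ι : Type*} [Fintype ι]

theorem EuclideanSpace.setIntegral_closedBall_linear_sq (g : ι → ℝ) {r : ℝ} (hr : 0 ≤ r) :
    ∫ x in closedBall (0 : EuclideanSpace ℝ ι) r, (∑ i, g i * x i) ^ 2 =
      (∑ i, g i ^ 2) * (volume.real (closedBall (0 : EuclideanSpace ℝ ι) 1) *
        r ^ (Fintype.card ι + 2) / (Fintype.card ι + 2)) := by
  have h (x : EuclideanSpace ℝ ι) : ∑ i, g i * x i = ⟪WithLp.toLp 2 g, x⟫ := by
    simp [PiLp.inner_apply, mul_comm]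
  simp_rw [h, setIntegral_closedBall_inner_sq _ hr, EuclideanSpace.real_norm_sq_eq]
  simp

variable [DecidableEq ι]

theorem EuclideanSpace.setIntegral_closedBall_apply_mul_apply (i j : ι) {r : ℝ} (hr : 0 ≤ r) :
    ∫ x in closedBall (0 : EuclideanSpace ℝ ι) r, x i * x j =
      (if i = j then 1 else 0) * (volume.real (closedBall (0 : EuclideanSpace ℝ ι) 1) *
        r ^ (Fintype.card ι + 2) / (Fintype.card ι + 2)) := by
  simpa [EuclideanSpace.inner_single_left] using
    setIntegral_closedBall_inner_mul_inner (EuclideanSpace.single i (1 : ℝ))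
      (EuclideanSpace.single j 1) hr

theorem EuclideanSpace.setIntegral_closedBall_apply_mul_apply_mul_apply_mul_apply (i j k l : ι)
    {r : ℝ} (hr : 0 ≤ r) :
    ∫ x in closedBall (0 : EuclideanSpace ℝ ι) r, x i * x j * x k * x l =
      ((if i = j then 1 else 0) * (if k = l then 1 else 0) +
          (if i = k then 1 else 0) * (if j = l then 1 else 0) +
          (if i = l then 1 else 0) * (if j = k then 1 else 0)) *
        (volume.real (closedBall (0 : EuclideanSpace ℝ ι) 1) * r ^ (Fintype.card ι + 4) /
          ((Fintype.card ι + 2) * (Fintype.card ι + 4))) := by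
  simpa [EuclideanSpace.inner_single_left] using
    setIntegral_closedBall_inner_mul_inner_mul_inner_mul_inner (EuclideanSpace.single i (1 : ℝ))
      (EuclideanSpace.single j 1) (EuclideanSpace.single k 1) (EuclideanSpace.single l 1) hr

theorem Matrix.IsSymm.sum_mul_mul_isotropic {H : Matrix ι ι ℝ} (hH : H.IsSymm) :
    ∑ i, ∑ j, ∑ k, ∑ l, H i j * H k l *
        ((if i = j then 1 else 0) * (if k = l then 1 else 0) +
          (if i = k then 1 else 0) * (if j = l then 1 else 0) +
          (if i = l then 1 else 0) * (if j = k then 1 else 0)) =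
      H.trace ^ 2 + 2 * ∑ i, ∑ j, H i j ^ 2 := by
  simp only [mul_add, Finset.sum_add_distrib, mul_ite, mul_one, mul_zero, Finset.sum_ite_eq,
    Finset.mem_univ, if_true]
  simp [Matrix.trace, sq, Finset.sum_mul_sum, hH.apply]
  ring

theorem EuclideanSpace.setIntegral_closedBall_quadratic (H : Matrix ι ι ℝ) {r : ℝ} (hr : 0 ≤ r) :
    ∫ x in closedBall (0 : EuclideanSpace ℝ ι) r, ∑ i, ∑ j, x i * H i j * x j =
      H.trace * (volume.real (closedBall (0 : EuclideanSpace ℝ ι) 1) *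
        r ^ (Fintype.card ι + 2) / (Fintype.card ι + 2)) := by
  have h (x : EuclideanSpace ℝ ι) (i j : ι) : x i * H i j * x j = H i j * (x i * x j) := by ring
  simp_rw [h]
  simp (disch := exact fun _ _ => integrable_restrict_closedBall_of_continuous (by fun_prop) r)
    only [integral_finsetSum, integral_const_mul, setIntegral_closedBall_apply_mul_apply _ _ hr]
  simp [Matrix.trace, Finset.sum_mul]

theorem EuclideanSpace.setIntegral_closedBall_quadratic_sq {H : Matrix ι ι ℝ} (hH : H.IsSymm)
    {r : ℝ} (hr : 0 ≤ r) :
    ∫ x in closedBall (0 : EuclideanSpace ℝ ι) r, (∑ i, ∑ j, x i * H i j * x j) ^ 2 =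
      (H.trace ^ 2 + 2 * ∑ i, ∑ j, H i j ^ 2) *
        (volume.real (closedBall (0 : EuclideanSpace ℝ ι) 1) * r ^ (Fintype.card ι + 4) /
          ((Fintype.card ι + 2) * (Fintype.card ι + 4))) := by
  have h (x : EuclideanSpace ℝ ι) : (∑ i, ∑ j, x i * H i j * x j) ^ 2 =
      ∑ i, ∑ j, ∑ k, ∑ l, H i j * H k l * (x i * x j * x k * x l) := by
    rw [sq, Finset.sum_mul]
    simp_rw [Finset.sum_mul, Finset.mul_sum]
    ac_rfl
  simp_rw [h]
  simp (disch := exact fun _ _ => integrable_restrict_closedBall_of_continuous (by fun_prop) r)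
    only [integral_finsetSum, integral_const_mul,
      setIntegral_closedBall_apply_mul_apply_mul_apply_mul_apply _ _ _ _ hr]
  simp_rw [← mul_assoc, ← Finset.sum_mul, hH.sum_mul_mul_isotropic]

end Euclidean

/-- Lemma (squared L² norm of a quadratic over a ball): for
`m(x) = ½(x−x_k)ᵀH(x−x_k) + gᵀ(x−x_k) + c` with `H` symmetric,
`∫_{B(x_k,r)} m(x)² dx = V_n rⁿ [ c² + (r²/(n+2))(‖g‖₂² + c·Tr H)
  + (r⁴/(2(n+4)(n+2)))‖H‖_F² + (r⁴/(4(n+4)(n+2)))(Tr H)² ]`. -/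
theorem quadratic_L2_norm_over_ball {n : ℕ}
    (xk : EuclideanSpace ℝ (Fin n)) (r : ℝ) (hr : 0 < r)
    (H : Matrix (Fin n) (Fin n) ℝ) (hH : H.IsSymm) (g : Fin n → ℝ) (c : ℝ)
    (Vn : ℝ) (hVn : Vn = (volume (Metric.closedBall (0 : EuclideanSpace ℝ (Fin n)) 1)).toReal) :
    (∫ x in Metric.closedBall xk r,
        ((1 / 2) * (∑ i, ∑ j, (x i - xk i) * H i j * (x j - xk j)) +
          (∑ i, g i * (x i - xk i)) + c) ^ 2) =
      Vn * r ^ n *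
        (c ^ 2 + (r ^ 2 / ((n : ℝ) + 2)) * ((∑ i, (g i) ^ 2) + c * H.trace) +
          (r ^ 4 / (2 * ((n : ℝ) + 4) * ((n : ℝ) + 2))) * (∑ i, ∑ j, (H i j) ^ 2) +
          (r ^ 4 / (4 * ((n : ℝ) + 4) * ((n : ℝ) + 2))) * H.trace ^ 2) := by
  let q (y : EuclideanSpace ℝ (Fin n)) : ℝ := ∑ i, ∑ j, y i * H i j * y j
  let l (y : EuclideanSpace ℝ (Fin n)) : ℝ := ∑ i, g i * y i
  have hodd : ∫ y in closedBall 0 r, (q y + 2 * c) * l y = 0 :=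
    setIntegral_closedBall_eq_zero_of_odd (fun y => by simp [q, l]) r
  have hconst :
      ∫ _ in closedBall (0 : EuclideanSpace ℝ (Fin n)) r, c ^ 2 = Vn * r ^ n * c ^ 2 := by
    rw [setIntegral_const, Measure.addHaar_real_closedBall' _ _ hr.le, hVn, measureReal_def,
      finrank_euclideanSpace_fin, smul_eq_mul]
    ring
  calc _ = ∫ y in closedBall 0 r, ((1 / 2) * q y + l y + c) ^ 2 :=
        setIntegral_closedBall_comp_sub xk (fun y => ((1 / 2) * q y + l y + c) ^ 2) r
    _ = ∫ y in closedBall 0 r,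
          ((1 / 4) * q y ^ 2 + l y ^ 2 + c * q y + c ^ 2 + (q y + 2 * c) * l y) := by
        congr 1; ext y; ring
    _ = (1 / 4) * (∫ y in closedBall 0 r, q y ^ 2) + (∫ y in closedBall 0 r, l y ^ 2) +
          c * (∫ y in closedBall 0 r, q y) +
          ∫ _ in closedBall (0 : EuclideanSpace ℝ (Fin n)) r, c ^ 2 := by
        rw [integral_add, integral_add, integral_add, integral_add, integral_const_mul,
          integral_const_mul, hodd, add_zero]
        all_goals exact integrable_restrict_closedBall_of_continuous (by fun_prop) r
    _ = _ := by
        rw [EuclideanSpace.setIntegral_closedBall_quadratic_sq hH hr.le,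
          EuclideanSpace.setIntegral_closedBall_linear_sq g hr.le,
          EuclideanSpace.setIntegral_closedBall_quadratic H hr.le, hconst, measureReal_def, ← hVn,
          Fintype.card_fin]
        field_simp
        ring
end

section
/- Let n ≥ 1 and ε ∈ (0,1), and define Error₂(C₁,C₂) = (1/6)[24C₁² + 16C₁(ε−1) + 6C₂²n + ε(4C₂n − 2n − 8) − 4C₂n + ε²(n+4) + n + 4]. Then ((1−ε)/3, (1−ε)/3) is the unique minimizer of Error₂ over the triangle C = {(C₁,C₂) : C₁ ≥ 0, C₂ ≥ 0, C₁+C₂ ≤ 1−ε}. -/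
set_option maxHeartbeats 1000000 in
/-- The barycentric weights minimize the limiting average squared KKT matrix
error term: `((1−ε)/3, (1−ε)/3)` is the unique minimizer over the triangle
`{C₁ ≥ 0, C₂ ≥ 0, C₁+C₂ ≤ 1−ε}` of
`Error₂(C₁,C₂) = (1/6)[24C₁² + 16C₁(ε−1) + 6C₂²n + ε(4C₂n − 2n − 8) − 4C₂n
  + ε²(n+4) + n + 4]`. -/
theorem barycenter_minimizes_error2 (n : ℕ) (hn : 1 ≤ n) (ε : ℝ)
    (hε : ε ∈ Set.Ioo (0 : ℝ) 1) :
    letI Error₂ : ℝ → ℝ → ℝ := fun C₁ C₂ =>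
      (1 / 6) * (24 * C₁ ^ 2 + 16 * C₁ * (ε - 1) + 6 * C₂ ^ 2 * (n : ℝ) +
        ε * (4 * C₂ * (n : ℝ) - 2 * (n : ℝ) - 8) - 4 * C₂ * (n : ℝ) +
        ε ^ 2 * ((n : ℝ) + 4) + (n : ℝ) + 4)
    (0 ≤ (1 - ε) / 3 ∧ 0 ≤ (1 - ε) / 3 ∧ (1 - ε) / 3 + (1 - ε) / 3 ≤ 1 - ε) ∧
    ∀ C₁ C₂ : ℝ, 0 ≤ C₁ → 0 ≤ C₂ → C₁ + C₂ ≤ 1 - ε →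
      Error₂ ((1 - ε) / 3) ((1 - ε) / 3) ≤ Error₂ C₁ C₂ ∧
      (Error₂ C₁ C₂ = Error₂ ((1 - ε) / 3) ((1 - ε) / 3) →
        C₁ = (1 - ε) / 3 ∧ C₂ = (1 - ε) / 3) := by
  obtain ⟨hε0, hε1⟩ := hε
  have hn1 : (1 : ℝ) ≤ (n : ℝ) := by exact_mod_cast hn
  refine ⟨⟨by linarith, by linarith, by linarith⟩, ?_⟩
  intro C₁ C₂ _ _ _
  beta_reduce
  have h : (1 / 6) * (24 * C₁ ^ 2 + 16 * C₁ * (ε - 1) + 6 * C₂ ^ 2 * (n : ℝ) +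
        ε * (4 * C₂ * (n : ℝ) - 2 * (n : ℝ) - 8) - 4 * C₂ * (n : ℝ) +
        ε ^ 2 * ((n : ℝ) + 4) + (n : ℝ) + 4) -
      (1 / 6) * (24 * ((1 - ε) / 3) ^ 2 + 16 * ((1 - ε) / 3) * (ε - 1) +
        6 * ((1 - ε) / 3) ^ 2 * (n : ℝ) +
        ε * (4 * ((1 - ε) / 3) * (n : ℝ) - 2 * (n : ℝ) - 8) - 4 * ((1 - ε) / 3) * (n : ℝ) +
        ε ^ 2 * ((n : ℝ) + 4) + (n : ℝ) + 4) =
      4 * (C₁ - (1 - ε) / 3) ^ 2 + (n : ℝ) * (C₂ - (1 - ε) / 3) ^ 2 := by ring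
  constructor
  · nlinarith [sq_nonneg (C₁ - (1 - ε) / 3), sq_nonneg (C₂ - (1 - ε) / 3),
      mul_nonneg (le_trans zero_le_one hn1) (sq_nonneg (C₂ - (1 - ε) / 3))]
  · intro heq
    rw [heq] at h
    have h0 : 4 * (C₁ - (1 - ε) / 3) ^ 2 + (n : ℝ) * (C₂ - (1 - ε) / 3) ^ 2 = 0 := by
      linarith
    have h1 : (C₁ - (1 - ε) / 3) ^ 2 = 0 := by
      linarith [sq_nonneg (C₁ - (1 - ε) / 3),
        mul_nonneg (le_trans zero_le_one hn1) (sq_nonneg (C₂ - (1 - ε) / 3))]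
    have h2 : (C₂ - (1 - ε) / 3) ^ 2 = 0 := by
      linarith [sq_nonneg (C₂ - (1 - ε) / 3), sq_nonneg (C₁ - (1 - ε) / 3),
        mul_nonneg (by linarith : (0:ℝ) ≤ (n : ℝ) - 1) (sq_nonneg (C₂ - (1 - ε) / 3))]
    constructor
    · have := pow_eq_zero_iff (n := 2) (by norm_num) |>.mp h1; linarith
    · have := pow_eq_zero_iff (n := 2) (by norm_num) |>.mp h2; linarith
end
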